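/- Let Δ ⊂ ℝⁿ be a compact convex set with nonempty interior containing the origin in its interior, let u₀ : ℝⁿ → ℝ be a smooth convex function with bounded gradient, ∇u₀(ℝⁿ) = int Δ and ∫_{ℝⁿ} e^{-u₀} dx = vol(Δ). Let t ∈ (0,1) and let u : ℝⁿ → ℝ be a smooth function with everywhere positive-definite Hessian, ∇u(ℝⁿ) = int Δ and det(D²u) = e^{-w} where w := (1-t)u₀ + t·u, and suppose w(x) ≥ κ‖x‖ - C for some κ > 0, C ∈ ℝ. Then the point -(t/(1-t))·P_c belongs to Δ, where P_c = (∫_Δ y dy)/vol(Δ) is the barycenter of Δ. -/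

import Mathlib

/-!
Let `ν = e^{-w} dx`. Since `det D²u = e^{-w}` and `∇u` is injective (its derivative is
positive definite), the change of variables `y = ∇u(x)` pushes `ν` forward to Lebesgue measure
on `int Δ`; so `ν` has total mass `vol Δ` and `∫ ∇u dν = ∫_Δ y dy`. Integrating by parts,
`∫ ∇w dν = -∫ ∇(e^{-w}) dx = 0`, and `∇w = (1-t)∇u₀ + t∇u` gives
`(1-t) ∫ ∇u₀ dν = -t ∫_Δ y dy`. Hence `-(t/(1-t)) P_c` is the `ν`-average of `∇u₀`,
which takes values in the closed convex set `Δ`.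
-/

open MeasureTheory Set
open scoped RealInnerProductSpace

section InnerProductSpace

variable {E : Type*} [NormedAddCommGroup E] [InnerProductSpace ℝ E]

theorem injective_of_inner_fderiv_self_pos {F : E → E} (hF : Differentiable ℝ F)
    (hpos : ∀ x h, h ≠ 0 → 0 < ⟪fderiv ℝ F x h, h⟫) : Function.Injective F := by
  intro x y hxy
  by_contra hne
  set v := x - y
  -- `s ↦ ⟪F (y + s • v), v⟫` is strictly increasing, yet equal at `s = 0` and `s = 1`
  have hder (s : ℝ) : HasDerivAt (fun s : ℝ => ⟪F (y + s • v), v⟫)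
      ⟪fderiv ℝ F (y + s • v) v, v⟫ s := by
    have hline : HasDerivAt (fun s : ℝ => y + s • v) v s := by
      simpa using ((hasDerivAt_id s).smul_const v).const_add y
    simpa using ((hF _).hasFDerivAt.comp_hasDerivAt s hline).inner ℝ (hasDerivAt_const s v)
  have hmono := strictMono_of_deriv_pos fun s => (hder s).deriv ▸ hpos _ _ (sub_ne_zero.2 hne)
  simpa [v, hxy] using hmono zero_lt_one

theorem ContDiff.gradient [CompleteSpace E] {f : E → ℝ} {m n : WithTop ℕ∞}
    (hf : ContDiff ℝ n f) (hmn : m + 1 ≤ n) : ContDiff ℝ m (gradient f) :=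
  (InnerProductSpace.toDual ℝ E).symm.contDiff.comp (hf.fderiv_right hmn)

theorem gradient_const_mul_add_const_mul [CompleteSpace E] {f g : E → ℝ} {x : E}
    (hf : DifferentiableAt ℝ f x) (hg : DifferentiableAt ℝ g x) (a b : ℝ) :
    gradient (fun y => a * f y + b * g y) x = a • gradient f x + b • gradient g x := by
  refine ext_inner_right ℝ fun v => ?_
  rw [inner_gradient_left,
    ((hf.hasFDerivAt.const_mul a).fun_add (hg.hasFDerivAt.const_mul b)).fderiv]
  simp [inner_add_left, real_inner_smul_left, inner_gradient_left]

end InnerProductSpace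

theorem eq_neg_div_smul_of_smul_add_smul_eq_zero {K V : Type*} [Field K] [AddCommGroup V]
    [Module K V] {a b : K} {x y : V} (ha : a ≠ 0) (h : a • x + b • y = 0) :
    x = -(b / a) • y := by
  refine smul_right_injective V ha ?_
  simp only
  rw [smul_smul, mul_neg, mul_div_cancel₀ b ha, neg_smul, eq_neg_iff_add_eq_zero, h]

theorem Continuous.integrable_of_isBounded_range {α E : Type*} [TopologicalSpace α]
    [MeasurableSpace α] [OpensMeasurableSpace α] [NormedAddCommGroup E]
    [SecondCountableTopologyEither α E] {μ : Measure α} [IsFiniteMeasure μ] {f : α → E}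
    (hf : Continuous f) (hb : Bornology.IsBounded (range f)) : Integrable f μ := by
  obtain ⟨C, hC⟩ := hb.exists_norm_le
  exact .of_bound hf.aestronglyMeasurable C (ae_of_all _ fun x => hC _ (mem_range_self x))

section IntegrationByParts

variable {E F : Type*} [NormedAddCommGroup E] [NormedSpace ℝ E] [FiniteDimensional ℝ E]
  [MeasurableSpace E] [BorelSpace E] {μ : Measure E} [μ.IsAddHaarMeasure]
  [NormedAddCommGroup F] [NormedSpace ℝ F]

theorem integral_fderiv_apply_eq_zero {f : E → F} {v : E} (hf : Differentiable ℝ f)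
    (hfi : Integrable f μ) (hf'i : Integrable (fun x => fderiv ℝ f x v) μ) :
    ∫ x, fderiv ℝ f x v ∂μ = 0 := by
  simpa using integral_smul_fderiv_eq_neg_fderiv_smul_of_integrable (μ := μ)
    (f := fun _ => (1 : ℝ)) (g := f) (v := v) (by simp) (by simpa using hf'i) (by simpa using hfi)
    (fun x _ => differentiableAt_const _) (fun x _ => hf x)

end IntegrationByParts

section GibbsMeasure

variable {E F : Type*} [MeasurableSpace E] [NormedAddCommGroup F] [NormedSpace ℝ F]
  {μ : Measure E} {w : E → ℝ}

noncomputable def gibbsMeasure (μ : Measure E) (w : E → ℝ) : Measure E :=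
  μ.withDensity fun x => ENNReal.ofReal (Real.exp (-w x))

theorem integral_gibbsMeasure (hw : Measurable w) (g : E → F) :
    ∫ x, g x ∂gibbsMeasure μ w = ∫ x, Real.exp (-w x) • g x ∂μ := by
  rw [gibbsMeasure, integral_withDensity_eq_integral_toReal_smul (by fun_prop)
    (ae_of_all _ fun _ => ENNReal.ofReal_lt_top)]
  simp_rw [ENNReal.toReal_ofReal (Real.exp_pos _).le]

theorem integrable_gibbsMeasure_iff (hw : Measurable w) {g : E → F} :
    Integrable g (gibbsMeasure μ w) ↔ Integrable (fun x => Real.exp (-w x) • g x) μ := by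
  rw [gibbsMeasure, integrable_withDensity_iff_integrable_smul' (by fun_prop)
    (ae_of_all _ fun _ => ENNReal.ofReal_lt_top)]
  simp_rw [ENNReal.toReal_ofReal (Real.exp_pos _).le]

end GibbsMeasure

section FiniteDimensional

variable {E : Type*} [NormedAddCommGroup E] [InnerProductSpace ℝ E] [FiniteDimensional ℝ E]
  [MeasurableSpace E] [BorelSpace E] {μ : Measure E} [μ.IsAddHaarMeasure] {w : E → ℝ}

theorem integral_gradient_gibbsMeasure_eq_zero (hw : Differentiable ℝ w)
    [IsFiniteMeasure (gibbsMeasure μ w)] (hint : Integrable (gradient w) (gibbsMeasure μ w)) :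
    ∫ x, gradient w x ∂gibbsMeasure μ w = 0 := by
  have hwm : Measurable w := hw.continuous.measurable
  have hρ (x : E) : HasFDerivAt (fun y => Real.exp (-w y))
      (Real.exp (-w x) • -fderiv ℝ w x) x :=
    (hw x).hasFDerivAt.neg.exp
  refine ext_inner_right ℝ fun v => ?_
  have hintv : Integrable (fun x => Real.exp (-w x) • fderiv ℝ w x v) μ := by
    simpa [integrable_gibbsMeasure_iff hwm, inner_gradient_left] using
      hint.inner_const (𝕜 := ℝ) v
  have hρint : Integrable (fun x => Real.exp (-w x)) μ := by
    simpa [integrable_gibbsMeasure_iff hwm] using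
      integrable_const (μ := gibbsMeasure μ w) (1 : ℝ)
  have hibp := integral_fderiv_apply_eq_zero (v := v) (fun x => (hρ x).differentiableAt) hρint
    (by simpa [(hρ _).fderiv] using hintv.neg)
  rw [inner_zero_left, real_inner_comm, ← integral_inner hint, integral_gibbsMeasure hwm]
  simpa [(hρ _).fderiv, inner_gradient_left, integral_neg] using hibp

theorem smul_integral_gradient_add_smul_integral_gradient_eq_zero {u₀ u : E → ℝ} {a b : ℝ}
    (hu₀ : Differentiable ℝ u₀) (hu : Differentiable ℝ u)
    (hw : ∀ x, w x = a * u₀ x + b * u x) [IsFiniteMeasure (gibbsMeasure μ w)]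
    (hu₀i : Integrable (gradient u₀) (gibbsMeasure μ w))
    (hui : Integrable (gradient u) (gibbsMeasure μ w)) :
    a • ∫ x, gradient u₀ x ∂gibbsMeasure μ w +
      b • ∫ x, gradient u x ∂gibbsMeasure μ w = 0 := by
  obtain rfl : w = fun x => a * u₀ x + b * u x := funext hw
  have hgw (x : E) :
      gradient (fun x => a * u₀ x + b * u x) x = a • gradient u₀ x + b • gradient u x :=
    gradient_const_mul_add_const_mul (hu₀ x) (hu x) a b
  have hu₀i' : Integrable (fun x => a • gradient u₀ x) (gibbsMeasure μ _) := hu₀i.smul a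
  have hui' : Integrable (fun x => b • gradient u x) (gibbsMeasure μ _) := hui.smul b
  have hIBP := integral_gradient_gibbsMeasure_eq_zero (μ := μ) (by fun_prop)
    ((hu₀i'.add hui').congr (ae_of_all _ fun x => (hgw x).symm))
  simp_rw [hgw] at hIBP
  rwa [integral_add hu₀i' hui', integral_smul, integral_smul] at hIBP

variable {F : E → E}

theorem map_gibbsMeasure_eq_restrict_range (hF : Differentiable ℝ F) (hinj : Function.Injective F)
    (hdet : ∀ x, (fderiv ℝ F x).det = Real.exp (-w x)) :
    (gibbsMeasure μ w).map F = μ.restrict (range F) := by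
  have := map_withDensity_abs_det_fderiv_eq_addHaar μ nullMeasurableSet_univ
    (fun x _ => (hF x).hasFDerivAt.hasFDerivWithinAt) hinj.injOn
  simpa [gibbsMeasure, hdet, abs_of_pos (Real.exp_pos _), image_univ] using this

theorem gibbsMeasure_univ_eq_measure_range (hF : Differentiable ℝ F)
    (hinj : Function.Injective F) (hdet : ∀ x, (fderiv ℝ F x).det = Real.exp (-w x)) :
    gibbsMeasure μ w univ = μ (range F) := by
  have := congrArg (· univ) (map_gibbsMeasure_eq_restrict_range (μ := μ) hF hinj hdet)
  rwa [Measure.map_apply hF.continuous.measurable .univ, preimage_univ,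
    Measure.restrict_apply_univ] at this

theorem integral_gibbsMeasure_eq_setIntegral_range (hF : Differentiable ℝ F)
    (hinj : Function.Injective F) (hdet : ∀ x, (fderiv ℝ F x).det = Real.exp (-w x)) :
    ∫ x, F x ∂gibbsMeasure μ w = ∫ y in range F, y ∂μ := by
  rw [← map_gibbsMeasure_eq_restrict_range hF hinj hdet]
  exact (integral_map hF.continuous.aemeasurable aestronglyMeasurable_id).symm

end FiniteDimensional

theorem scaled_barycenter_mem_polytope_general {n : ℕ}
    (Δ : Set (EuclideanSpace ℝ (Fin n))) (hΔcpt : IsCompact Δ) (hΔconv : Convex ℝ Δ)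
    (u₀ : EuclideanSpace ℝ (Fin n) → ℝ) (hu₀smooth : ContDiff ℝ (⊤ : ℕ∞) u₀)
    (hu₀grad : Set.range (gradient u₀) = interior Δ)
    (t : ℝ) (ht : t ∈ Set.Ioo (0 : ℝ) 1)
    (u w : EuclideanSpace ℝ (Fin n) → ℝ) (husmooth : ContDiff ℝ (⊤ : ℕ∞) u)
    (hupos : ∀ x h, h ≠ 0 → 0 < ⟪(fderiv ℝ (gradient u) x) h, h⟫)
    (hugrad : Set.range (gradient u) = interior Δ)
    (hwdef : ∀ x, w x = (1 - t) * u₀ x + t * u x)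
    (hudet : ∀ x, LinearMap.det (fderiv ℝ (gradient u) x).toLinearMap
        = Real.exp (-(w x))) :
    -(t / (1 - t)) • ((volume Δ).toReal⁻¹ • ∫ y in Δ, y) ∈ Δ := by
  have hgu₀ : Continuous (gradient u₀) :=
    (hu₀smooth.gradient (m := 1) (by norm_cast)).continuous
  have hgu : Differentiable ℝ (gradient u) :=
    (husmooth.gradient (m := 1) (by norm_cast)).differentiable one_ne_zero
  have hinj := injective_of_inner_fderiv_self_pos hgu hupos
  have hΔae : interior Δ =ᵐ[volume] Δ :=
    interior_ae_eq_of_null_frontier (hΔconv.addHaar_frontier volume)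
  set ν := gibbsMeasure volume w
  have hνuniv : ν univ = volume Δ := by
    rw [gibbsMeasure_univ_eq_measure_range hgu hinj hudet, hugrad, measure_congr hΔae]
  have : IsFiniteMeasure ν := ⟨hνuniv ▸ hΔcpt.measure_lt_top⟩
  have hνpos : ν univ ≠ 0 := hνuniv ▸
    (Measure.measure_pos_of_nonempty_interior volume ⟨_, hugrad ▸ mem_range_self 0⟩).ne'
  have : NeZero ν := ⟨Measure.measure_univ_ne_zero.1 hνpos⟩
  have hu₀Δ : range (gradient u₀) ⊆ Δ := hu₀grad ▸ interior_subset
  have hI₀ : Integrable (gradient u₀) ν :=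
    hgu₀.integrable_of_isBounded_range (hΔcpt.isBounded.subset hu₀Δ)
  have hI : Integrable (gradient u) ν := hgu.continuous.integrable_of_isBounded_range
    (hΔcpt.isBounded.subset (hugrad ▸ interior_subset))
  have hcomb := smul_integral_gradient_add_smul_integral_gradient_eq_zero
    (hu₀smooth.differentiable (by simp)) (husmooth.differentiable (by simp)) hwdef hI₀ hI
  rw [integral_gibbsMeasure_eq_setIntegral_range hgu hinj hudet, hugrad,
    setIntegral_congr_set hΔae] at hcomb
  have havg := hΔconv.average_mem hΔcpt.isClosed
    (ae_of_all _ fun x => hu₀Δ (mem_range_self x)) hI₀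
  rwa [average_eq, measureReal_def, hνuniv,
    eq_neg_div_smul_of_smul_add_smul_eq_zero (sub_ne_zero.2 ht.2.ne') hcomb, smul_comm] at havg

/-- Let `Δ ⊂ ℝⁿ` be a compact convex set with the origin in its interior,
`u₀` smooth convex with bounded gradient, `∇u₀(ℝⁿ) = int Δ` and `∫ e^{-u₀} = vol Δ`.
Let `t ∈ (0,1)` and let `u` be smooth with positive-definite Hessian,
`∇u(ℝⁿ) = int Δ`, `det D²u = e^{-w}` where `w = (1-t)u₀ + t·u`, with
`w x ≥ κ‖x‖ - C` for some `κ > 0`.  Then `-(t/(1-t)) • P_c ∈ Δ`, where `P_c` is the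
barycenter of `Δ`. -/
theorem scaled_barycenter_mem_polytope {n : ℕ}
    (Δ : Set (EuclideanSpace ℝ (Fin n))) (hΔcpt : IsCompact Δ) (hΔconv : Convex ℝ Δ)
    (hΔ0 : (0 : EuclideanSpace ℝ (Fin n)) ∈ interior Δ)
    (u₀ : EuclideanSpace ℝ (Fin n) → ℝ) (hu₀smooth : ContDiff ℝ (⊤ : ℕ∞) u₀)
    (hu₀conv : ConvexOn ℝ Set.univ u₀)
    (L : ℝ) (hu₀bdd : ∀ x, ‖gradient u₀ x‖ ≤ L)
    (hu₀grad : Set.range (gradient u₀) = interior Δ)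
    (hu₀norm : (∫ x, Real.exp (-(u₀ x))) = (volume Δ).toReal)
    (t : ℝ) (ht : t ∈ Set.Ioo (0 : ℝ) 1)
    (u w : EuclideanSpace ℝ (Fin n) → ℝ) (husmooth : ContDiff ℝ (⊤ : ℕ∞) u)
    (hupos : ∀ x h, h ≠ 0 → 0 < ⟪(fderiv ℝ (gradient u) x) h, h⟫)
    (hugrad : Set.range (gradient u) = interior Δ)
    (hwdef : ∀ x, w x = (1 - t) * u₀ x + t * u x)
    (hudet : ∀ x, LinearMap.det (fderiv ℝ (gradient u) x).toLinearMap
        = Real.exp (-(w x)))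
    (κ C : ℝ) (hκ : 0 < κ) (hgrowth : ∀ x, κ * ‖x‖ - C ≤ w x) :
    -(t / (1 - t)) • ((volume Δ).toReal⁻¹ • ∫ y in Δ, y) ∈ Δ :=
  scaled_barycenter_mem_polytope_general Δ hΔcpt hΔconv u₀ hu₀smooth hu₀grad t ht u w husmooth hupos
    hugrad hwdef hudet
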